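/- If n = 2^d for some d ≥ 1, then all 2^{n-1} compositions α of n have odd ribbon number r_α; that is, the number of compositions of n with r_α ≡ 0 (mod 2) is 0 and the number with r_α ≡ 1 (mod 2) is 2^{n-1}. -/

import Mathlib

/-- Permutations of `{1, ..., n}`, modeled as functions `ℕ → ℕ` that restrict to a
bijection of `{1, ..., n}` and fix everything else. -/
def PermsA (n : ℕ) : Set (ℕ → ℕ) :=
  {w | Set.BijOn w (Set.Icc 1 n) (Set.Icc 1 n) ∧ ∀ i ∉ Set.Icc 1 n, w i = i}

/-- The descent set `D(w) = {i ∈ [n-1] : w(i) > w(i+1)}`. -/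
def DesA (n : ℕ) (w : ℕ → ℕ) : Set ℕ :=
  {i | 1 ≤ i ∧ i < n ∧ w (i + 1) < w i}

/-- The descent set `D(α) = {α₁, α₁+α₂, …, α₁+⋯+α_{ℓ-1}}` of a composition `α` of `n`. -/
def DsetA {n : ℕ} (α : Composition n) : Set ℕ :=
  {m | ∃ i, 0 < i ∧ i < α.length ∧ α.sizeUpTo i = m}

/-- The type A ribbon number `r_α = |{w ∈ S_n : D(w) = D(α)}|`. -/
noncomputable def ribbonA {n : ℕ} (α : Composition n) : ℕ :=
  Set.ncard {w ∈ PermsA n | DesA n w = DsetA α}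

open Finset

set_option linter.unreachableTactic false
set_option linter.unusedTactic false
set_option linter.unnecessarySeqFocus false

theorem card_modEq_filter_fixed {α : Type*} [DecidableEq α] (f : α → α) (s : Finset α)
    (hmem : ∀ a ∈ s, f a ∈ s) (hinv : ∀ a ∈ s, f (f a) = a) :
    s.card ≡ (s.filter fun a => f a = a).card [MOD 2] := by
  classical
  induction s using Finset.strongInduction with
  | _ s ih =>
    by_cases hall : ∀ a ∈ s, f a = a
    · rw [Finset.filter_true_of_mem hall]
    · push_neg at hall
      obtain ⟨a, ha, hfa⟩ := hall
      have hfas : f a ∈ s := hmem a ha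
      set t := (s.erase a).erase (f a) with ht
      have htsub : t ⊂ s := by
        refine Finset.ssubset_of_subset_of_ssubset ?_ (Finset.erase_ssubset ha)
        exact Finset.erase_subset _ _
      have htmem : ∀ b ∈ t, f b ∈ t := by
        intro b hb
        simp only [ht, Finset.mem_erase] at hb ⊢
        obtain ⟨hbfa, hba, hbs⟩ := hb
        refine ⟨?_, ?_, hmem b hbs⟩
        · intro h; apply hba; rw [← hinv b hbs, h, hinv a ha]
        · intro h; apply hbfa; rw [← hinv b hbs, h]
      have htinv : ∀ b ∈ t, f (f b) = b := fun b hb =>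
        hinv b (Finset.mem_of_mem_erase (Finset.mem_of_mem_erase hb))
      have hcard : s.card = t.card + 2 := by
        have h1 : f a ∈ s.erase a := Finset.mem_erase.2 ⟨hfa, hfas⟩
        rw [ht, Finset.card_erase_of_mem h1, Finset.card_erase_of_mem ha]
        have := Finset.card_pos.2 ⟨a, ha⟩
        have := Finset.one_lt_card.2 ⟨a, ha, f a, hfas, fun h => hfa h.symm⟩
        omega
      have hfilter : s.filter (fun a => f a = a) = t.filter (fun a => f a = a) := by
        apply Finset.ext; intro x
        simp only [Finset.mem_filter, ht, Finset.mem_erase]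
        constructor
        · rintro ⟨hxs, hfx⟩
          refine ⟨⟨?_, ?_, hxs⟩, hfx⟩
          · rintro rfl; exact hfa (by rw [← hinv a ha, hfx, hfx])
          · rintro rfl; exact hfa hfx
        · rintro ⟨⟨_, _, hxs⟩, hfx⟩; exact ⟨hxs, hfx⟩
      rw [hfilter, hcard]
      have := ih t htsub htmem htinv
      simp only [Nat.ModEq] at this ⊢
      omega

def fib {n l : ℕ} (g : Fin n → Fin l) (i : Fin l) : ℕ :=
  (Finset.univ.filter fun j => g j = i).card

def Gset (n l : ℕ) (b : Fin l → ℕ) : Finset (Fin n → Fin l) :=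
  Finset.univ.filter fun g => ∀ i, fib g i = b i

def Gcnt (n l : ℕ) (b : Fin l → ℕ) : ℕ := (Gset n l b).card

lemma mem_Gset {n l : ℕ} {b : Fin l → ℕ} {g : Fin n → Fin l} :
    g ∈ Gset n l b ↔ ∀ i, fib g i = b i := by simp [Gset]

def Dw (n : ℕ) (w : ℕ → ℕ) : Finset ℕ := (Finset.Ico 1 n).filter fun i => w (i+1) < w i

def Dfin {n : ℕ} (α : Composition n) : Finset ℕ := (Finset.Ioo 0 α.length).image α.sizeUpTo

-- finiteness of PermsA
lemma finite_permsA (n : ℕ) : (PermsA n).Finite := by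
  have hbound : ∀ (w : PermsA n) (i : Fin (n+1)), w.1 i.val < n + 1 := by
    intro w i
    by_cases hp : (i : ℕ) ∈ Set.Icc 1 n
    · have := w.2.1.mapsTo hp
      rw [Set.mem_Icc] at this
      omega
    · rw [w.2.2 _ hp]; exact i.isLt
  have hinj : Function.Injective
      (fun w : PermsA n => fun i : Fin (n+1) => (⟨w.1 i.val, hbound w i⟩ : Fin (n+1))) := by
    intro w w' h
    apply Subtype.ext
    funext p
    by_cases hp : p ∈ Set.Icc 1 n
    · have hp' : p < n + 1 := by rw [Set.mem_Icc] at hp; omega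
      have := congrFun h ⟨p, hp'⟩
      simpa using congrArg Fin.val this
    · rw [w.2.2 p hp, w'.2.2 p hp]
  have : Finite (PermsA n) := Finite.of_injective _ hinj
  exact Set.toFinite _

noncomputable def permsFinset (n : ℕ) : Finset (ℕ → ℕ) := (finite_permsA n).toFinset

lemma mem_permsFinset {n : ℕ} {w : ℕ → ℕ} : w ∈ permsFinset n ↔ w ∈ PermsA n :=
  Set.Finite.mem_toFinset _

section LemmaA

variable {n : ℕ} (α : Composition n)

lemma index_unique (j : Fin n) (i : Fin α.length) (h1 : α.sizeUpTo i.val ≤ j.val)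
    (h2 : j.val < α.sizeUpTo (i.val + 1)) : α.index j = i := by
  rcases lt_trichotomy (α.index j).val i.val with h | h | h
  · exfalso
    have h3 := α.lt_sizeUpTo_index_succ j
    rw [Fin.val_succ] at h3
    have h4 := α.monotone_sizeUpTo (show ((α.index j).val + 1) ≤ i.val from h)
    omega
  · exact Fin.ext h
  · exfalso
    have h3 := α.sizeUpTo_index_le j
    have h4 := α.monotone_sizeUpTo (show i.val + 1 ≤ (α.index j).val from h)
    omega

lemma offset_lt (j : Fin n) : j.val - α.sizeUpTo (α.index j) < α.blocksFun (α.index j) := by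
  have h1 := α.sizeUpTo_index_le j
  have h2 := α.lt_sizeUpTo_index_succ j
  rw [Fin.val_succ] at h2
  rw [α.sizeUpTo_succ'] at h2
  omega

def PsiAux (g : Fin n → Fin α.length) (hg : ∀ i, fib g i = α.blocksFun i) (j : Fin n) : ℕ :=
  ((Finset.univ.filter fun x => g x = α.index j).orderEmbOfFin (hg (α.index j))
    ⟨j.val - α.sizeUpTo (α.index j), offset_lt α j⟩).val + 1

lemma PsiAux_eq (g : Fin n → Fin α.length) (hg : ∀ i, fib g i = α.blocksFun i) (j : Fin n)
    {i : Fin α.length} (hi : α.index j = i) (hk : j.val - α.sizeUpTo i < α.blocksFun i) :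
    PsiAux α g hg j =
      ((Finset.univ.filter fun x => g x = i).orderEmbOfFin (hg i)
        ⟨j.val - α.sizeUpTo i, hk⟩).val + 1 := by
  subst hi; rfl

def Psi (g : Fin n → Fin α.length) (hg : ∀ i, fib g i = α.blocksFun i) : ℕ → ℕ :=
  fun p => if hp : p ∈ Finset.Icc 1 n then
    PsiAux α g hg ⟨p - 1, by rw [Finset.mem_Icc] at hp; omega⟩ else p

lemma Psi_not_mem (g hg) {p : ℕ} (hp : p ∉ Finset.Icc 1 n) : Psi α g hg p = p := dif_neg hp

lemma Psi_mem (g hg) {p : ℕ} (hp : p ∈ Finset.Icc 1 n) :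
    Psi α g hg p = PsiAux α g hg ⟨p - 1, by rw [Finset.mem_Icc] at hp; omega⟩ := dif_pos hp

lemma PsiAux_apply (g : Fin n → Fin α.length) (hg : ∀ i, fib g i = α.blocksFun i)
    (i : Fin α.length) (k : ℕ) (hk : k < α.blocksFun i) (j : Fin n)
    (hj : j.val = α.sizeUpTo i.val + k) :
    PsiAux α g hg j =
      ((Finset.univ.filter fun x => g x = i).orderEmbOfFin (hg i) ⟨k, hk⟩).val + 1 := by
  have hidx : α.index j = i := index_unique α j i (by omega)
    (by rw [α.sizeUpTo_succ' i] at *; omega)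
  have hk2 : j.val - α.sizeUpTo i < α.blocksFun i := by omega
  rw [PsiAux_eq α g hg j hidx hk2]
  rw [show (⟨j.val - α.sizeUpTo i, hk2⟩ : Fin (α.blocksFun i)) = ⟨k, hk⟩ from Fin.ext (show j.val - α.sizeUpTo i.val = k by omega)]

lemma Psi_apply (g : Fin n → Fin α.length) (hg : ∀ i, fib g i = α.blocksFun i)
    (i : Fin α.length) (k : ℕ) (hk : k < α.blocksFun i) :
    Psi α g hg (α.sizeUpTo i.val + k + 1) =
      ((Finset.univ.filter fun x => g x = i).orderEmbOfFin (hg i) ⟨k, hk⟩).val + 1 := by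
  have hle : α.sizeUpTo i.val + α.blocksFun i ≤ n := by
    have h1 := α.sizeUpTo_succ' i
    have h2 := α.sizeUpTo_le (i.val + 1)
    omega
  have hmem : α.sizeUpTo i.val + k + 1 ∈ Finset.Icc 1 n := by
    rw [Finset.mem_Icc]; omega
  rw [Psi_mem α g hg hmem]
  exact PsiAux_apply α g hg i k hk _ (show α.sizeUpTo i.val + k + 1 - 1 = α.sizeUpTo i.val + k by omega)


lemma Psi_val (g : Fin n → Fin α.length) (hg : ∀ i, fib g i = α.blocksFun i)
    (p : ℕ) (j : Fin n) (hj : j.val + 1 = p) {i : Fin α.length} (hi : α.index j = i)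
    (hk : j.val - α.sizeUpTo i.val < α.blocksFun i) :
    Psi α g hg p = ((Finset.univ.filter fun x => g x = i).orderEmbOfFin (hg i)
      ⟨j.val - α.sizeUpTo i.val, hk⟩).val + 1 := by
  have hp : p ∈ Finset.Icc 1 n := by rw [Finset.mem_Icc]; have := j.isLt; omega
  rw [Psi_mem α g hg hp]
  have hjj : (⟨p - 1, by rw [Finset.mem_Icc] at hp; omega⟩ : Fin n) = j :=
    Fin.ext (show p - 1 = j.val by omega)
  rw [hjj, PsiAux_eq α g hg j hi hk]

lemma PsiAux_bounds (g : Fin n → Fin α.length) (hg : ∀ i, fib g i = α.blocksFun i) (j : Fin n) :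
    1 ≤ PsiAux α g hg j ∧ PsiAux α g hg j ≤ n := by
  have h := ((Finset.univ.filter fun x => g x = α.index j).orderEmbOfFin (hg (α.index j))
      ⟨j.val - α.sizeUpTo (α.index j), offset_lt α j⟩).isLt
  unfold PsiAux
  omega

lemma Psi_mem_permsA (g : Fin n → Fin α.length) (hg : ∀ i, fib g i = α.blocksFun i) :
    Psi α g hg ∈ PermsA n := by
  constructor
  · refine ⟨?_, ?_, ?_⟩
    · -- maps to
      intro p hp
      rw [Set.mem_Icc] at hp
      have hp' : p ∈ Finset.Icc 1 n := by rw [Finset.mem_Icc]; exact hp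
      rw [Psi_mem α g hg hp']
      have := PsiAux_bounds α g hg ⟨p - 1, by omega⟩
      rw [Set.mem_Icc]
      exact this
    · -- inj on
      intro p hp q hq he
      rw [Set.mem_Icc] at hp hq
      set jp : Fin n := ⟨p - 1, by omega⟩ with hjp
      set jq : Fin n := ⟨q - 1, by omega⟩ with hjq
      have hep : Psi α g hg p = PsiAux α g hg jp := by
        rw [Psi_mem α g hg (by rw [Finset.mem_Icc]; exact hp)]
      have heq : Psi α g hg q = PsiAux α g hg jq := by
        rw [Psi_mem α g hg (by rw [Finset.mem_Icc]; exact hq)]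
      rw [hep, heq] at he
      unfold PsiAux at he
      set xp := (Finset.univ.filter fun x => g x = α.index jp).orderEmbOfFin (hg (α.index jp))
        ⟨jp.val - α.sizeUpTo (α.index jp), offset_lt α jp⟩ with hxp
      set xq := (Finset.univ.filter fun x => g x = α.index jq).orderEmbOfFin (hg (α.index jq))
        ⟨jq.val - α.sizeUpTo (α.index jq), offset_lt α jq⟩ with hxq
      have hxx : xp = xq := Fin.ext (by omega)
      have hgp : g xp = α.index jp := by
        have := Finset.orderEmbOfFin_mem (Finset.univ.filter fun x => g x = α.index jp)
          (hg (α.index jp)) ⟨jp.val - α.sizeUpTo (α.index jp), offset_lt α jp⟩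
        exact (Finset.mem_filter.mp this).2
      have hgq : g xq = α.index jq := by
        have := Finset.orderEmbOfFin_mem (Finset.univ.filter fun x => g x = α.index jq)
          (hg (α.index jq)) ⟨jq.val - α.sizeUpTo (α.index jq), offset_lt α jq⟩
        exact (Finset.mem_filter.mp this).2
      have hii : α.index jp = α.index jq := by rw [← hgp, ← hgq, hxx]
      have key : ∀ (i i' : Fin α.length) (h : i = i') (a : ℕ) (ha : a < α.blocksFun i)
          (b : ℕ) (hb : b < α.blocksFun i'),
          ((Finset.univ.filter fun x => g x = i).orderEmbOfFin (hg i) ⟨a, ha⟩ : Fin n)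
            = (Finset.univ.filter fun x => g x = i').orderEmbOfFin (hg i') ⟨b, hb⟩ → a = b := by
        intro i i' h
        subst h
        intro a ha b hb hE
        have := (Finset.orderEmbOfFin (Finset.univ.filter fun x => g x = i) (hg i)).injective hE
        exact congrArg Fin.val this
      have hoff := key _ _ hii _ (offset_lt α jp) _ (offset_lt α jq) hxx
      have h5 : α.sizeUpTo (α.index jp) ≤ jp.val := α.sizeUpTo_index_le jp
      have h6 : α.sizeUpTo (α.index jq) ≤ jq.val := α.sizeUpTo_index_le jq
      have h7 : α.sizeUpTo (α.index jp).val = α.sizeUpTo (α.index jq).val := by rw [hii]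
      have h8 : jp.val = jq.val := by omega
      simp only [hjp, hjq] at h8
      omega
    · -- surj on
      intro v hv
      rw [Set.mem_Icc] at hv
      have hn : 0 < n := by omega
      set x : Fin n := ⟨v - 1, by omega⟩ with hx
      set i := g x with hi
      have hxmem : x ∈ (Finset.univ.filter fun y => g y = i) := by
        rw [Finset.mem_filter]; exact ⟨Finset.mem_univ x, rfl⟩
      have hrange : x ∈ Set.range ((Finset.univ.filter fun y => g y = i).orderEmbOfFin (hg i)) := by
        have hR := Finset.range_orderEmbOfFin _ (hg i); rw [Set.ext_iff] at hR; exact (hR x).2 hxmem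
      obtain ⟨k, hk⟩ := hrange
      set p := α.sizeUpTo i.val + k.val + 1 with hpd
      have hle : α.sizeUpTo i.val + α.blocksFun i ≤ n := by
        have h1 := α.sizeUpTo_succ' i
        have h2 := α.sizeUpTo_le (i.val + 1)
        omega
      have hkl := k.isLt
      refine ⟨p, ?_, ?_⟩
      · rw [Set.mem_Icc]; omega
      · have := Psi_apply α g hg i k.val k.isLt
        rw [← hpd] at this
        rw [this]
        have hk' : (⟨k.val, k.isLt⟩ : Fin (α.blocksFun i)) = k := Fin.ext rfl
        rw [hk', hk]
        simp only [hx]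
        omega
  · intro p hp
    apply Psi_not_mem
    rw [Finset.mem_Icc]; rw [Set.mem_Icc] at hp; omega


lemma Dw_Psi_subset (g : Fin n → Fin α.length) (hg : ∀ i, fib g i = α.blocksFun i) :
    Dw n (Psi α g hg) ⊆ Dfin α := by
  intro p hp
  rw [Dw, Finset.mem_filter, Finset.mem_Ico] at hp
  obtain ⟨⟨h1, h2⟩, hdes⟩ := hp
  set jp : Fin n := ⟨p - 1, by omega⟩ with hjp
  set jq : Fin n := ⟨p, by omega⟩ with hjq
  set i := α.index jp with hi
  set i' := α.index jq with hi'
  have e1 := Psi_val α g hg p jp (by simp [hjp] <;> omega) hi.symm (offset_lt α jp)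
  have e2 := Psi_val α g hg (p + 1) jq (by simp [hjq]) hi'.symm (offset_lt α jq)
  have h3 : α.sizeUpTo i.val ≤ jp.val := α.sizeUpTo_index_le jp
  have h4 : jp.val < α.sizeUpTo (i.val + 1) := by
    have := α.lt_sizeUpTo_index_succ jp
    rw [Fin.val_succ] at this
    exact this
  have h5 : α.sizeUpTo i'.val ≤ jq.val := α.sizeUpTo_index_le jq
  have h6 : jq.val < α.sizeUpTo (i'.val + 1) := by
    have := α.lt_sizeUpTo_index_succ jq
    rw [Fin.val_succ] at this
    exact this
  have hjpv : jp.val = p - 1 := rfl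
  have hjqv : jq.val = p := rfl
  by_cases hii : i = i'
  · exfalso
    -- within a block, Psi is increasing
    have e2' := Psi_val α g hg (p + 1) jq (by simp [hjq]) (hi'.symm.trans hii.symm)
      (by have := offset_lt α jq; rw [← hi', ← hii] at this; exact this)
    rw [e1, e2'] at hdes
    have hmono := (Finset.orderEmbOfFin (Finset.univ.filter fun x => g x = i) (hg i)).strictMono
    have hlt : (⟨jp.val - α.sizeUpTo i.val, offset_lt α jp⟩ : Fin (α.blocksFun i))
        < ⟨jq.val - α.sizeUpTo i.val,
          by have := offset_lt α jq; rw [← hi', ← hii] at this; exact this⟩ := by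
      rw [Fin.lt_def]
      simp only
      omega
    have := hmono hlt
    rw [Fin.lt_def] at this
    omega
  · -- p is a boundary
    have hlt : i.val < i'.val := by
      rcases lt_trichotomy i.val i'.val with h | h | h
      · exact h
      · exact absurd (Fin.ext h) hii
      · exfalso
        have := α.monotone_sizeUpTo (show i'.val + 1 ≤ i.val from h)
        omega
    have h7 := α.monotone_sizeUpTo (show i.val + 1 ≤ i'.val from hlt)
    have h8 : p = α.sizeUpTo (i.val + 1) := by omega
    rw [Dfin, Finset.mem_image]
    refine ⟨i.val + 1, ?_, h8.symm⟩
    rw [Finset.mem_Ioo]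
    have := i'.isLt
    omega

lemma Psi_inj (g g' : Fin n → Fin α.length) (hg : ∀ i, fib g i = α.blocksFun i)
    (hg' : ∀ i, fib g' i = α.blocksFun i) (h : Psi α g hg = Psi α g' hg') : g = g' := by
  funext x
  set i := g x with hi
  have hxmem : x ∈ (Finset.univ.filter fun y => g y = i) := by
    rw [Finset.mem_filter]; exact ⟨Finset.mem_univ x, rfl⟩
  have hrange : x ∈ Set.range ((Finset.univ.filter fun y => g y = i).orderEmbOfFin (hg i)) := by
    have hR := Finset.range_orderEmbOfFin _ (hg i); rw [Set.ext_iff] at hR; exact (hR x).2 hxmem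
  obtain ⟨k, hk⟩ := hrange
  set p := α.sizeUpTo i.val + k.val + 1 with hpd
  have hle : α.sizeUpTo i.val + α.blocksFun i ≤ n := by
    have h1 := α.sizeUpTo_succ' i
    have h2 := α.sizeUpTo_le (i.val + 1)
    omega
  have hkl := k.isLt
  set j : Fin n := ⟨α.sizeUpTo i.val + k.val, by omega⟩ with hj
  have hidx : α.index j = i := index_unique α j i (by simp [hj] <;> omega)
    (by rw [α.sizeUpTo_succ' i]; simp [hj] <;> omega)
  have e1 := Psi_val α g hg p j (by simp [hj, hpd]) hidx
    (by simp [hj] <;> omega)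
  have e2 := Psi_val α g' hg' p j (by simp [hj, hpd]) rfl (offset_lt α j)
  rw [h] at e1
  rw [e2] at e1
  -- e1 : E'_{index j} off + 1 = E_i off' + 1
  have hoff : (⟨j.val - α.sizeUpTo i.val, by simp [hj] <;> omega⟩ : Fin (α.blocksFun i))
      = ⟨k.val, hkl⟩ := Fin.ext (by simp [hj])
  have e3 : ((Finset.univ.filter fun y => g' y = α.index j).orderEmbOfFin (hg' (α.index j))
      ⟨j.val - α.sizeUpTo (α.index j).val, offset_lt α j⟩ : Fin n)
      = ((Finset.univ.filter fun y => g y = i).orderEmbOfFin (hg i) ⟨j.val - α.sizeUpTo i.val,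
        by simp [hj] <;> omega⟩ : Fin n) := Fin.ext (by omega)
  rw [hoff, hk] at e3
  have hmem' := Finset.orderEmbOfFin_mem (Finset.univ.filter fun y => g' y = α.index j)
    (hg' (α.index j)) ⟨j.val - α.sizeUpTo (α.index j).val, offset_lt α j⟩
  rw [e3] at hmem'
  have := (Finset.mem_filter.mp hmem').2
  rw [this, hidx]


lemma Psi_surj (w : ℕ → ℕ) (hw : w ∈ PermsA n) (hsub : Dw n w ⊆ Dfin α) :
    ∃ g : Fin n → Fin α.length, ∃ hg : ∀ i, fib g i = α.blocksFun i, Psi α g hg = w := by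
  obtain ⟨hbij, hfix⟩ := hw
  have hval : ∀ p ∈ Set.Icc 1 n, 1 ≤ w p ∧ w p ≤ n := by
    intro p hp
    have := hbij.1 hp
    rwa [Set.mem_Icc] at this
  set u := Function.invFunOn w (Set.Icc 1 n) with hu
  have hw_surj : ∀ v ∈ Set.Icc 1 n, v ∈ w '' Set.Icc 1 n := fun v hv => hbij.2.2 hv
  have hu_mem : ∀ v, v ∈ Set.Icc 1 n → (1 ≤ u v ∧ u v ≤ n) := by
    intro v hv
    have := Function.invFunOn_mem (hw_surj v hv)
    rwa [Set.mem_Icc] at this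
  have hu_eq : ∀ v, v ∈ Set.Icc 1 n → w (u v) = v := fun v hv =>
    Function.invFunOn_eq (hw_surj v hv)
  have hu_w : ∀ p, p ∈ Set.Icc 1 n → u (w p) = p := by
    intro p hp
    have h1 := hval p hp
    have h2 : w p ∈ Set.Icc 1 n := by rw [Set.mem_Icc]; exact h1
    have h3 := hu_mem _ h2
    exact hbij.2.1 (by rw [Set.mem_Icc]; exact h3) hp (hu_eq _ h2)
  -- ascending within blocks
  have hstep : ∀ (i : Fin α.length) (q : ℕ), α.sizeUpTo i.val < q →
      q + 1 ≤ α.sizeUpTo (i.val + 1) → w q < w (q + 1) := by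
    intro i q hq1 hq2
    have hsn := α.sizeUpTo_le (i.val + 1)
    have h1q : 1 ≤ q := by omega
    have hqn : q < n := by omega
    have hnd : q ∉ Dw n w := by
      intro hmem
      have hD := hsub hmem
      rw [Dfin, Finset.mem_image] at hD
      obtain ⟨m, hm, hms⟩ := hD
      rw [Finset.mem_Ioo] at hm
      rcases le_or_gt m i.val with h | h
      · have := α.monotone_sizeUpTo h; omega
      · have := α.monotone_sizeUpTo (show i.val + 1 ≤ m from h); omega
    rw [Dw, Finset.mem_filter, Finset.mem_Ico] at hnd
    push_neg at hnd
    have hle := hnd ⟨h1q, hqn⟩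
    have hne : w q ≠ w (q + 1) := by
      intro he
      have := hbij.2.1 (show q ∈ Set.Icc 1 n by rw [Set.mem_Icc]; omega)
        (show q + 1 ∈ Set.Icc 1 n by rw [Set.mem_Icc]; omega) he
      omega
    omega
  have hasc : ∀ (i : Fin α.length) (p q : ℕ), α.sizeUpTo i.val < p → p < q →
      q ≤ α.sizeUpTo (i.val + 1) → w p < w q := by
    intro i p q
    induction q with
    | zero => omega
    | succ q ih =>
      intro hp hpq hq
      rcases Nat.lt_or_ge p q with h | h
      · have h1 := ih hp h (by omega)
        have h2 := hstep i q (by omega) (by omega)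
        omega
      · have : p = q := by omega
        subst this
        exact hstep i p hp hq
  -- the coloring
  have hgpf : ∀ x : Fin n, u (x.val + 1) - 1 < n := by
    intro x
    have hx := x.isLt
    have := hu_mem (x.val + 1) (by rw [Set.mem_Icc]; omega)
    omega
  set g : Fin n → Fin α.length := fun x => α.index ⟨u (x.val + 1) - 1, hgpf x⟩ with hgdef
  -- block position bounds
  have hble : ∀ i : Fin α.length, α.sizeUpTo i.val + α.blocksFun i ≤ n := by
    intro i
    have h1 := α.sizeUpTo_succ' i
    have h2 := α.sizeUpTo_le (i.val + 1)
    omega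
  have hFpf : ∀ (i : Fin α.length) (k : Fin (α.blocksFun i)),
      w (α.sizeUpTo i.val + k.val + 1) - 1 < n := by
    intro i k
    have := hble i
    have hk := k.isLt
    have := hval (α.sizeUpTo i.val + k.val + 1) (by rw [Set.mem_Icc]; omega)
    omega
  set F : ∀ i : Fin α.length, Fin (α.blocksFun i) → Fin n :=
    fun i k => ⟨w (α.sizeUpTo i.val + k.val + 1) - 1, hFpf i k⟩ with hFdef
  have hwp1 : ∀ (i : Fin α.length) (k : Fin (α.blocksFun i)),
      1 ≤ w (α.sizeUpTo i.val + k.val + 1) := by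
    intro i k
    have := hble i
    have hk := k.isLt
    exact (hval _ (by rw [Set.mem_Icc]; omega)).1
  have hFmono : ∀ i, StrictMono (F i) := by
    intro i k k' hkk
    have hk := k.isLt
    have hk' := k'.isLt
    have hlt := hasc i (α.sizeUpTo i.val + k.val + 1) (α.sizeUpTo i.val + k'.val + 1)
      (by omega) (by rw [Fin.lt_def] at hkk; omega)
      (by rw [α.sizeUpTo_succ' i]; omega)
    rw [Fin.lt_def]
    have := hwp1 i k
    simp only [hFdef]
    omega
  have hFmem : ∀ (i : Fin α.length) (k : Fin (α.blocksFun i)),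
      F i k ∈ (Finset.univ.filter fun x => g x = i) := by
    intro i k
    rw [Finset.mem_filter]
    refine ⟨Finset.mem_univ _, ?_⟩
    have hk := k.isLt
    have hble' := hble i
    have hpmem : α.sizeUpTo i.val + k.val + 1 ∈ Set.Icc 1 n := by rw [Set.mem_Icc]; omega
    have hw1 := hwp1 i k
    have harg : u ((F i k).val + 1) - 1 = α.sizeUpTo i.val + k.val := by
      have h1 : (F i k).val + 1 = w (α.sizeUpTo i.val + k.val + 1) := by
        simp only [hFdef]; omega
      rw [h1, hu_w _ hpmem]
      omega
    show α.index ⟨u ((F i k).val + 1) - 1, hgpf (F i k)⟩ = i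
    have : (⟨u ((F i k).val + 1) - 1, hgpf (F i k)⟩ : Fin n)
        = ⟨α.sizeUpTo i.val + k.val, by omega⟩ := Fin.ext harg
    rw [this]
    exact index_unique α _ i (by simp) (by rw [α.sizeUpTo_succ' i]; simp <;> omega)
  have hfiber : ∀ i : Fin α.length,
      (Finset.univ.filter fun x => g x = i) = Finset.image (F i) Finset.univ := by
    intro i
    apply Finset.ext
    intro x
    rw [Finset.mem_image]
    constructor
    · intro hx
      have hgx : g x = i := (Finset.mem_filter.mp hx).2
      have hxlt := x.isLt
      have hxmem : x.val + 1 ∈ Set.Icc 1 n := by rw [Set.mem_Icc]; omega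
      have hp1 := hu_mem _ hxmem
      have hwp := hu_eq _ hxmem
      set jp : Fin n := ⟨u (x.val + 1) - 1, hgpf x⟩ with hjp
      have hidx : α.index jp = i := hgx
      have h3 : α.sizeUpTo i.val ≤ jp.val := by rw [← hidx]; exact α.sizeUpTo_index_le jp
      have h4 : jp.val < α.sizeUpTo (i.val + 1) := by
        have := α.lt_sizeUpTo_index_succ jp
        rw [Fin.val_succ, hidx] at this
        exact this
      rw [α.sizeUpTo_succ' i] at h4
      have hjpv : jp.val = u (x.val + 1) - 1 := rfl
      refine ⟨⟨jp.val - α.sizeUpTo i.val, by omega⟩, Finset.mem_univ _, ?_⟩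
      apply Fin.ext
      simp only [hFdef]
      have hpos : α.sizeUpTo i.val + (jp.val - α.sizeUpTo i.val) + 1 = u (x.val + 1) := by omega
      rw [hpos, hwp]
      omega
    · rintro ⟨k, -, rfl⟩
      exact hFmem i k
  have hg : ∀ i, fib g i = α.blocksFun i := by
    intro i
    rw [fib, hfiber i, Finset.card_image_of_injective _ (hFmono i).injective]
    simp
  refine ⟨g, hg, ?_⟩
  funext p
  by_cases hp : p ∈ Finset.Icc 1 n
  · rw [Finset.mem_Icc] at hp
    rw [Psi_mem α g hg (by rw [Finset.mem_Icc]; exact hp)]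
    set jp : Fin n := ⟨p - 1, by omega⟩ with hjp
    set i := α.index jp with hi
    have hEF : F i = ⇑((Finset.univ.filter fun x => g x = i).orderEmbOfFin (hg i)) :=
      Finset.orderEmbOfFin_unique (hg i) (fun k => hFmem i k) (hFmono i)
    show ((Finset.univ.filter fun x => g x = i).orderEmbOfFin (hg i)
      ⟨jp.val - α.sizeUpTo i.val, offset_lt α jp⟩).val + 1 = w p
    rw [← hEF]
    have h3 : α.sizeUpTo i.val ≤ jp.val := α.sizeUpTo_index_le jp
    have hppos : α.sizeUpTo i.val + (jp.val - α.sizeUpTo i.val) + 1 = p := by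
      have : jp.val = p - 1 := rfl
      omega
    simp only [hFdef]
    rw [hppos]
    have := (hval p (by rw [Set.mem_Icc]; exact hp)).1
    omega
  · rw [Psi_not_mem α g hg hp, hfix p (by rw [Set.mem_Icc]; rw [Finset.mem_Icc] at hp; omega)]

lemma cardA : ((permsFinset n).filter fun w => Dw n w ⊆ Dfin α).card
    = Gcnt n α.length α.blocksFun := by
  rw [Gcnt]
  symm
  apply Finset.card_bij (i := fun g hg => Psi α g (mem_Gset.mp hg))
  · intro g hg
    rw [Finset.mem_filter, mem_permsFinset]
    exact ⟨Psi_mem_permsA α g _, Dw_Psi_subset α g _⟩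
  · intro g1 h1 g2 h2 he
    exact Psi_inj α g1 g2 _ _ he
  · intro w hw
    rw [Finset.mem_filter, mem_permsFinset] at hw
    obtain ⟨g, hg, heq⟩ := Psi_surj α w hw.1 hw.2
    exact ⟨g, mem_Gset.mpr hg, heq⟩

end LemmaA


-- extend a composition of m to a composition of n by appending a last block
def extendComp {m n : ℕ} (α' : Composition m) (h : m < n) : Composition n where
  blocks := α'.blocks ++ [n - m]
  blocks_pos := by
    intro i hi
    rw [List.mem_append] at hi
    rcases hi with hi | hi
    · exact α'.blocks_pos hi
    · rw [List.mem_singleton] at hi; omega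
  blocks_sum := by rw [List.sum_append, α'.blocks_sum, List.sum_singleton]; omega

lemma extendComp_length {m n : ℕ} (α' : Composition m) (h : m < n) :
    (extendComp α' h).length = α'.length + 1 := by
  simp [extendComp, Composition.length]

lemma extendComp_sizeUpTo {m n : ℕ} (α' : Composition m) (h : m < n) (i : ℕ)
    (hi : i ≤ α'.length) : (extendComp α' h).sizeUpTo i = α'.sizeUpTo i := by
  simp only [Composition.sizeUpTo, extendComp]
  rw [List.take_append_of_le_length]
  exact hi

lemma Dfin_extendComp {m n : ℕ} (α' : Composition m) (h : m < n) (hm : 0 < m) :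
    Dfin (extendComp α' h) = insert m (Dfin α') := by
  have hl : 0 < α'.length := α'.length_pos_of_pos hm
  rw [Dfin, Dfin, extendComp_length]
  have hIoo : Finset.Ioo 0 (α'.length + 1) = insert α'.length (Finset.Ioo 0 α'.length) := by
    apply Finset.ext
    intro x
    rw [Finset.mem_insert, Finset.mem_Ioo, Finset.mem_Ioo]
    omega
  rw [hIoo, Finset.image_insert]
  rw [extendComp_sizeUpTo α' h _ (le_refl _), α'.sizeUpTo_length]
  congr 1
  apply Finset.image_congr
  intro x hx
  rw [Finset.coe_Ioo, Set.mem_Ioo] at hx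
  exact extendComp_sizeUpTo α' h x (by omega)

lemma exists_comp : ∀ n : ℕ, ∀ T ⊆ Finset.Ico 1 n, ∃ α : Composition n, Dfin α = T := by
  intro n
  induction n using Nat.strong_induction_on with
  | _ n ih =>
    intro T hT
    rcases T.eq_empty_or_nonempty with rfl | hne
    · rcases Nat.eq_zero_or_pos n with rfl | hn
      · refine ⟨Composition.ones 0, ?_⟩
        rw [Dfin]
        have : (Composition.ones 0).length = 0 := Composition.ones_length 0
        rw [this]
        simp
      · refine ⟨Composition.single n hn, ?_⟩
        rw [Dfin, Composition.single_length]
        have hIoo : Finset.Ioo 0 1 = (∅ : Finset ℕ) := by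
          apply Finset.eq_empty_of_forall_notMem
          intro x hx
          rw [Finset.mem_Ioo] at hx
          omega
        rw [hIoo]
        simp
    · set m := T.max' hne with hm
      have hmT : m ∈ T := T.max'_mem hne
      have hmIco := hT hmT
      rw [Finset.mem_Ico] at hmIco
      have hT' : T.erase m ⊆ Finset.Ico 1 m := by
        intro x hx
        rw [Finset.mem_erase] at hx
        have h1 := hT hx.2
        rw [Finset.mem_Ico] at h1 ⊢
        have h2 := T.le_max' x hx.2
        have := hx.1
        constructor
        · exact h1.1
        · omega
      obtain ⟨α', hα'⟩ := ih m hmIco.2 (T.erase m) hT'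
      refine ⟨extendComp α' hmIco.2, ?_⟩
      rw [Dfin_extendComp α' hmIco.2 (by omega), hα', Finset.insert_erase hmT]

-- the per-descent-set counts
noncomputable def cntEq (n : ℕ) (T : Finset ℕ) : ℕ :=
  ((permsFinset n).filter fun w => Dw n w = T).card

lemma cnt_partition (n : ℕ) (S : Finset ℕ) :
    ((permsFinset n).filter fun w => Dw n w ⊆ S).card = ∑ T ∈ S.powerset, cntEq n T := by
  classical
  rw [Finset.card_eq_sum_card_fiberwise (f := fun w => Dw n w) (t := S.powerset)
    (fun w hw => Finset.mem_powerset.mpr (Finset.mem_filter.mp hw).2)]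
  apply Finset.sum_congr rfl
  intro T hT
  rw [Finset.mem_powerset] at hT
  rw [cntEq, Finset.filter_filter]
  congr 1
  apply Finset.filter_congr
  intro w _
  constructor
  · rintro ⟨_, h⟩; exact h
  · rintro rfl; exact ⟨hT, rfl⟩

lemma Gcnt_single (n : ℕ) (hn : 0 < n) :
    Gcnt n (Composition.single n hn).length ((Composition.single n hn).blocksFun) = 1 := by
  rw [Gcnt]
  have hGset : Gset n (Composition.single n hn).length ((Composition.single n hn).blocksFun)
      = Finset.univ := by
    apply Finset.filter_true_of_mem
    intro g _
    intro i
    have hss : ∀ a b : Fin (Composition.single n hn).length, a = b := by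
      intro a b
      apply Fin.ext
      have hl := Composition.single_length hn
      have ha := a.isLt
      have hb := b.isLt
      omega
    have h1 : (Finset.univ.filter fun j => g j = i) = Finset.univ := by
      apply Finset.filter_true_of_mem
      intro j _
      exact hss _ _
    rw [fib, h1, Finset.card_univ, Fintype.card_fin]
    rw [Composition.single_blocksFun]
  rw [hGset, Finset.card_univ, Fintype.card_fun]
  simp [Composition.single_length]
  left; exact Fintype.card_unique

lemma Dfin_single (n : ℕ) (hn : 0 < n) : Dfin (Composition.single n hn) = ∅ := by
  rw [Dfin, Composition.single_length]
  have hIoo : Finset.Ioo 0 1 = (∅ : Finset ℕ) := by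
    apply Finset.eq_empty_of_forall_notMem
    intro x hx
    rw [Finset.mem_Ioo] at hx
    omega
  rw [hIoo]
  simp

lemma cntEq_empty (n : ℕ) (hn : 0 < n) : cntEq n ∅ = 1 := by
  have h1 : cntEq n ∅ = ((permsFinset n).filter fun w => Dw n w ⊆ (∅ : Finset ℕ)).card := by
    rw [cntEq]
    congr 1
    apply Finset.filter_congr
    intro w _
    rw [Finset.subset_empty]
  rw [h1, ← Dfin_single n hn, cardA, Gcnt_single]

lemma Dfin_subset_Ico {n : ℕ} (α : Composition n) : Dfin α ⊆ Finset.Ico 1 n := by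
  intro x hx
  rw [Dfin, Finset.mem_image] at hx
  obtain ⟨i, hi, rfl⟩ := hx
  rw [Finset.mem_Ioo] at hi
  rw [Finset.mem_Ico]
  constructor
  · have h1 : α.sizeUpTo 0 < α.sizeUpTo 1 := α.sizeUpTo_strict_mono (by omega)
    have h2 := α.monotone_sizeUpTo (show 1 ≤ i by omega)
    rw [α.sizeUpTo_zero] at h1
    omega
  · have h1 : α.sizeUpTo i < α.sizeUpTo (i + 1) := α.sizeUpTo_strict_mono hi.2
    have h2 := α.sizeUpTo_le (i + 1)
    omega

lemma length_ge_two {n : ℕ} (α : Composition n) (hne : (Dfin α).Nonempty) : 2 ≤ α.length := by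
  by_contra h
  push_neg at h
  obtain ⟨x, hx⟩ := hne
  rw [Dfin, Finset.mem_image] at hx
  obtain ⟨i, hi, -⟩ := hx
  rw [Finset.mem_Ioo] at hi
  omega

section EvenB

lemma pow_succ_eq (d : ℕ) : 2^(d+1) = 2^d + 2^d := by rw [pow_succ]; omega

def tau (d : ℕ) : Fin (2^(d+1)) → Fin (2^(d+1)) :=
  fun x => x + ⟨2^d, by have := pow_succ_eq d; have := Nat.two_pow_pos d; omega⟩

lemma tau_val_lower {d : ℕ} (x : Fin (2^(d+1))) (h : x.val < 2^d) :
    (tau d x).val = x.val + 2^d := by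
  have e := pow_succ_eq d
  show (x.val + 2^d) % 2^(d+1) = x.val + 2^d
  exact Nat.mod_eq_of_lt (by omega)

lemma tau_val_upper {d : ℕ} (x : Fin (2^(d+1))) (h : 2^d ≤ x.val) :
    (tau d x).val = x.val - 2^d := by
  have e := pow_succ_eq d
  have hx := x.isLt
  show (x.val + 2^d) % 2^(d+1) = x.val - 2^d
  rw [Nat.mod_eq_sub_mod (by omega), Nat.mod_eq_of_lt (by omega)]
  omega

lemma tau_tau {d : ℕ} (x : Fin (2^(d+1))) : tau d (tau d x) = x := by
  have e := pow_succ_eq d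
  have hx := x.isLt
  apply Fin.ext
  rcases lt_or_ge x.val (2^d) with h | h
  · have h1 := tau_val_lower x h
    have h2 := tau_val_upper (tau d x) (by omega)
    omega
  · have h1 := tau_val_upper x h
    have h2 := tau_val_lower (tau d x) (by omega)
    omega

def emb (d : ℕ) : Fin (2^d) → Fin (2^(d+1)) :=
  fun x => ⟨x.val, by have := pow_succ_eq d; have := x.isLt; omega⟩

lemma fib_of_fixed {d l : ℕ} (g : Fin (2^(d+1)) → Fin l) (hfix : ∀ x, g (tau d x) = g x)
    (i : Fin l) : fib g i = 2 * fib (fun x : Fin (2^d) => g (emb d x)) i := by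
  classical
  have e := pow_succ_eq d
  set F : Finset (Fin (2^(d+1))) := Finset.univ.filter (fun j => g j = i) with hF
  have hsplit : F.card = (F.filter (fun j => j.val < 2^d)).card
      + (F.filter (fun j => ¬ j.val < 2^d)).card :=
    (Finset.card_filter_add_card_filter_not _).symm
  have hupper : (F.filter (fun j => ¬ j.val < 2^d)).card = (F.filter (fun j => j.val < 2^d)).card := by
    apply Finset.card_nbij' (i := fun j => tau d j) (j := fun j => tau d j)
    · intro a ha
      simp only [hF, Finset.mem_coe, Finset.mem_filter, Finset.mem_univ, true_and, not_lt] at ha ⊢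
      obtain ⟨hg, hge⟩ := ha
      have := a.isLt
      refine ⟨by rw [hfix]; exact hg, by rw [tau_val_upper a hge]; omega⟩
    · intro a ha
      simp only [hF, Finset.mem_coe, Finset.mem_filter, Finset.mem_univ, true_and, not_lt] at ha ⊢
      obtain ⟨hg, hlt⟩ := ha
      refine ⟨by rw [hfix]; exact hg, by rw [tau_val_lower a hlt]; omega⟩
    · intro a _; exact tau_tau a
    · intro a _; exact tau_tau a
  have hlower : (F.filter (fun j => j.val < 2^d)).card
      = (Finset.univ.filter fun x : Fin (2^d) => g (emb d x) = i).card := by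
    apply Finset.card_nbij'
      (i := fun j => (⟨j.val % 2^d, Nat.mod_lt _ (Nat.two_pow_pos d)⟩ : Fin (2^d)))
      (j := fun x => emb d x)
    · intro a ha
      simp only [hF, Finset.mem_coe, Finset.mem_filter, Finset.mem_univ, true_and] at ha ⊢
      obtain ⟨hg, hlt⟩ := ha
      have hemb : (emb d (⟨a.val % 2^d, Nat.mod_lt _ (Nat.two_pow_pos d)⟩ : Fin (2^d))) = a :=
        Fin.ext (by simp [emb, Nat.mod_eq_of_lt hlt])
      rw [hemb]; exact hg
    · intro a ha
      simp only [hF, Finset.mem_coe, Finset.mem_filter, Finset.mem_univ, true_and] at ha ⊢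
      exact ⟨ha, a.isLt⟩
    · intro a ha
      simp only [hF, Finset.mem_coe, Finset.mem_filter, Finset.mem_univ, true_and] at ha
      exact Fin.ext (by simp [emb, Nat.mod_eq_of_lt ha.2])
    · intro a _
      exact Fin.ext (by simp [emb, Nat.mod_eq_of_lt a.isLt])
  show F.card = 2 * (Finset.univ.filter fun x : Fin (2^d) => g (emb d x) = i).card
  omega

lemma mod_pow_eq {d : ℕ} (x : Fin (2^(d+1))) :
    ((tau d x).val) % 2^d = x.val % 2^d := by
  have e := pow_succ_eq d
  have hx := x.isLt
  have hp : 0 < 2^d := Nat.two_pow_pos d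
  rcases lt_or_ge x.val (2^d) with h | h
  · rw [tau_val_lower x h, Nat.add_mod_right]
  · rw [tau_val_upper x h]
    have h1 : x.val % 2^d = x.val - 2^d := by
      rw [Nat.mod_eq_sub_mod h, Nat.mod_eq_of_lt (by omega)]
    rw [h1, Nat.mod_eq_of_lt (by omega)]

def lift (d l : ℕ) (h : Fin (2^d) → Fin l) : Fin (2^(d+1)) → Fin l :=
  fun x => h ⟨x.val % 2^d, Nat.mod_lt _ (Nat.two_pow_pos d)⟩

lemma lift_fixed {d l : ℕ} (h : Fin (2^d) → Fin l) (x : Fin (2^(d+1))) :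
    lift d l h (tau d x) = lift d l h x := by
  unfold lift
  congr 1
  exact Fin.ext (mod_pow_eq x)

lemma lift_emb {d l : ℕ} (h : Fin (2^d) → Fin l) (x : Fin (2^d)) :
    lift d l h (emb d x) = h x := by
  unfold lift emb
  congr 1
  exact Fin.ext (Nat.mod_eq_of_lt x.isLt)

theorem evenB : ∀ d l (b : Fin l → ℕ), (∀ i, 0 < b i) → (∑ i, b i = 2^d) → 2 ≤ l →
    Even (Gcnt (2^d) l b) := by
  intro d
  induction d with
  | zero =>
    intro l b hb hsum hl
    exfalso
    have : (l : ℕ) ≤ ∑ i, b i := by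
      calc (l:ℕ) = ∑ _i : Fin l, 1 := by simp
      _ ≤ ∑ i, b i := Finset.sum_le_sum fun i _ => hb i
    simp at hsum; omega
  | succ d ih =>
    intro l b hb hsum hl
    classical
    set s : Finset (Fin (2^(d+1)) → Fin l) := Gset (2^(d+1)) l b with hs
    set f : (Fin (2^(d+1)) → Fin l) → (Fin (2^(d+1)) → Fin l) := fun g => g ∘ tau d with hf
    have hmem : ∀ g ∈ s, f g ∈ s := by
      intro g hg
      rw [hs, mem_Gset] at hg ⊢
      intro i
      rw [← hg i]
      show (Finset.univ.filter fun j => g (tau d j) = i).card = fib g i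
      apply Finset.card_nbij' (i := fun j => tau d j) (j := fun j => tau d j)
      · intro a ha; simp only [fib, Finset.mem_coe, Finset.mem_filter, Finset.mem_univ, true_and] at ha ⊢; exact ha
      · intro a ha; simp only [fib, Finset.mem_coe, Finset.mem_filter, Finset.mem_univ, true_and] at ha ⊢
        rw [tau_tau]; exact ha
      · intro a _; exact tau_tau a
      · intro a _; exact tau_tau a
    have hinv : ∀ g ∈ s, f (f g) = g := by
      intro g _; funext x; show g (tau d (tau d x)) = g x; rw [tau_tau]
    have hmod := card_modEq_filter_fixed f s hmem hinv
    have hfixed : Even ((s.filter fun g => f g = g).card) := by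
      by_cases hev : ∀ i, Even (b i)
      · have hcard : (s.filter fun g => f g = g).card = Gcnt (2^d) l (fun i => b i / 2) := by
          apply Finset.card_nbij' (i := fun g => fun x : Fin (2^d) => g (emb d x))
            (j := fun h => lift d l h)
          · intro g hg
            simp only [hs, Finset.mem_coe, Finset.mem_filter, mem_Gset] at hg
            obtain ⟨hgf, hgfix⟩ := hg
            have hfix : ∀ x, g (tau d x) = g x := fun x => congrFun hgfix x
            rw [Finset.mem_coe, mem_Gset]
            intro i
            have h2 := fib_of_fixed g hfix i
            rw [hgf i] at h2
            rcases hev i with ⟨k, hk⟩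
            beta_reduce
            omega
          · intro h hh
            rw [Finset.mem_coe, mem_Gset] at hh
            simp only [hs, Finset.mem_coe, Finset.mem_filter, mem_Gset]
            constructor
            · intro i
              have h2 := fib_of_fixed (lift d l h) (lift_fixed h) i
              have h3 : (fun x : Fin (2^d) => lift d l h (emb d x)) = h := funext (lift_emb h)
              rw [h3, hh i] at h2
              rcases hev i with ⟨k, hk⟩
              omega
            · funext x
              exact lift_fixed h x
          · intro g hg
            simp only [hs, Finset.mem_coe, Finset.mem_filter, mem_Gset] at hg
            obtain ⟨_, hgfix⟩ := hg
            have hfix : ∀ x, g (tau d x) = g x := fun x => congrFun hgfix x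
            funext x
            show lift d l (fun y => g (emb d y)) x = g x
            unfold lift
            rcases lt_or_ge x.val (2^d) with hx | hx
            · show g (emb d _) = g x
              congr 1
              exact Fin.ext (by simp [emb, Nat.mod_eq_of_lt hx])
            · have h1 : g x = g (tau d x) := (hfix x).symm
              rw [h1]
              show g (emb d _) = g (tau d x)
              congr 1
              apply Fin.ext
              simp only [emb]
              have e := pow_succ_eq d
              have hxlt := x.isLt
              rw [tau_val_upper x hx, Nat.mod_eq_sub_mod hx, Nat.mod_eq_of_lt (by omega)]
          · intro h _
            funext x
            exact lift_emb h x
        rw [hcard]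
        apply ih l (fun i => b i / 2)
        · intro i; have h1 := hb i; rcases hev i with ⟨k, hk⟩; omega
        · have h2 : ∑ i, b i = 2 * ∑ i, b i / 2 := by
            rw [Finset.mul_sum]
            apply Finset.sum_congr rfl
            intro i _
            rcases hev i with ⟨k, hk⟩; omega
          have e := pow_succ_eq (d)
          omega
        · exact hl
      · push_neg at hev
        obtain ⟨i0, hi0⟩ := hev
        have hempty : (s.filter fun g => f g = g) = ∅ := by
          apply Finset.filter_eq_empty_iff.mpr
          intro g hg hgfix
          rw [hs, mem_Gset] at hg
          have hfix : ∀ x, g (tau d x) = g x := fun x => congrFun hgfix x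
          have h2 := fib_of_fixed g hfix i0
          rw [hg i0] at h2
          exact hi0 ⟨fib (fun x : Fin (2^d) => g (emb d x)) i0, by omega⟩
        simp [hempty]
    simp only [Nat.ModEq] at hmod
    rw [Nat.even_iff] at hfixed ⊢
    show Gcnt (2^(d+1)) l b % 2 = 0
    have hGs : Gcnt (2^(d+1)) l b = s.card := rfl
    omega


-- coe lemmas
lemma coe_Dw (n : ℕ) (w : ℕ → ℕ) : (↑(Dw n w) : Set ℕ) = DesA n w := by
  ext i
  simp only [Dw, DesA, Finset.coe_filter, Finset.mem_Ico, Set.mem_setOf_eq]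
  tauto

lemma coe_Dfin {n : ℕ} (α : Composition n) : (↑(Dfin α) : Set ℕ) = DsetA α := by
  ext m
  simp only [Dfin, DsetA, Finset.coe_image, Finset.coe_Ioo, Set.mem_image, Set.mem_Ioo,
    Set.mem_setOf_eq]
  constructor
  · rintro ⟨i, ⟨h1, h2⟩, h3⟩; exact ⟨i, h1, h2, h3⟩
  · rintro ⟨i, h1, h2, h3⟩; exact ⟨i, ⟨h1, h2⟩, h3⟩

lemma ribbonA_eq_cntEq {n : ℕ} (α : Composition n) : ribbonA α = cntEq n (Dfin α) := by
  rw [ribbonA, cntEq]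
  rw [← Set.ncard_coe_finset]
  congr 1
  ext w
  simp only [Finset.coe_filter, Set.mem_setOf_eq, mem_permsFinset]
  constructor
  · rintro ⟨h1, h2⟩
    refine ⟨h1, ?_⟩
    apply Finset.coe_injective
    rw [coe_Dw, coe_Dfin, h2]
  · rintro ⟨h1, h2⟩
    refine ⟨h1, ?_⟩
    rw [← coe_Dw, ← coe_Dfin, h2]

-- main parity result
theorem cntEq_odd {d : ℕ} (hd : 1 ≤ d) :
    ∀ T : Finset ℕ, T ⊆ Finset.Ico 1 (2 ^ d) → cntEq (2 ^ d) T % 2 = 1 := by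
  intro T
  induction T using Finset.strongInduction with
  | _ T ih =>
    intro hT
    have hn : 0 < 2 ^ d := Nat.two_pow_pos d
    rcases T.eq_empty_or_nonempty with rfl | hne
    · rw [cntEq_empty _ hn]
    · obtain ⟨α, hα⟩ := exists_comp (2 ^ d) T hT
      have hlen : 2 ≤ α.length := length_ge_two α (hα ▸ hne)
      have heven : ((permsFinset (2 ^ d)).filter fun w => Dw (2 ^ d) w ⊆ T).card % 2 = 0 := by
        rw [← hα, cardA]
        rw [← Nat.even_iff]
        exact evenB d α.length α.blocksFun (fun i => α.one_le_blocksFun i)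
          α.sum_blocksFun hlen
      have hid := cnt_partition (2 ^ d) T
      rw [← Finset.add_sum_erase _ _ (Finset.mem_powerset_self T)] at hid
      have hsummod : (∑ U ∈ T.powerset.erase T, cntEq (2 ^ d) U) % 2
          = (T.powerset.erase T).card % 2 := by
        rw [Finset.sum_nat_mod]
        have : ∑ U ∈ T.powerset.erase T, cntEq (2 ^ d) U % 2
            = ∑ U ∈ T.powerset.erase T, 1 := by
          apply Finset.sum_congr rfl
          intro U hU
          rw [Finset.mem_erase, Finset.mem_powerset] at hU
          exact ih U (Finset.ssubset_iff_subset_ne.mpr ⟨hU.2, hU.1⟩) (hU.2.trans hT)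
        rw [this, Finset.sum_const, smul_eq_mul, mul_one]
      have hcard : (T.powerset.erase T).card = 2 ^ T.card - 1 := by
        rw [Finset.card_erase_of_mem (Finset.mem_powerset_self T), Finset.card_powerset]
      have hTpos : 1 ≤ T.card := Finset.card_pos.mpr hne
      have hpow : 2 ^ T.card = 2 * 2 ^ (T.card - 1) := by
        conv_lhs => rw [show T.card = (T.card - 1) + 1 by omega]
        rw [pow_succ]
        ring
      have hp1 : 1 ≤ 2 ^ (T.card - 1) := Nat.one_le_two_pow
      omega

theorem ribbonA_odd {n d : ℕ} (hd : 1 ≤ d) (hn : n = 2 ^ d) (α : Composition n) :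
    ribbonA α % 2 = 1 := by
  subst hn
  rw [ribbonA_eq_cntEq]
  exact cntEq_odd hd (Dfin α) (Dfin_subset_Ico α)

/-- If n = 2^d with d ≥ 1, then no composition of n has even ribbon number and all
2^{n-1} compositions of n have odd ribbon number. -/
theorem count_ribbonA_mod_two_of_two_pow {n d : ℕ} (hd : 1 ≤ d) (hn : n = 2 ^ d) :
    (Finset.univ.filter fun α : Composition n => ribbonA α % 2 = 0).card = 0 ∧
    (Finset.univ.filter fun α : Composition n => ribbonA α % 2 = 1).card = 2 ^ (n - 1) := by
  constructor
  · rw [Finset.card_eq_zero, Finset.filter_eq_empty_iff]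
    intro α _
    have := ribbonA_odd hd hn α
    omega
  · rw [Finset.filter_true_of_mem (fun α _ => ribbonA_odd hd hn α), Finset.card_univ,
      composition_card]
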